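/- arXiv:2108.12330 — 2 statements merged into one kernel-verified Lean document; each statement's English description precedes it below -/
import Mathlib

section
/- Let S be a type of states, τ : S → S → Prop a transition relation, ν : Set S a set of unsafe states, and I : Set S a set of initial states. Define Pre : Set S → Set S by Pre(X) = {s | ∃ s', τ s s' ∧ s' ∈ X}, and let Pre^[k] denote its k-fold iterate. Then there exist s ∈ I and t ∈ ν with Relation.ReflTransGen τ s t if and only if there exists k ∈ ℕ such that I ∩ Pre^[k](ν) is nonempty. (This is the semantic core of the soundness and completeness of backward reachability: the system is unsafe w.r.t. ν iff some formula ι ∧ Pre^k(ν) is satisfiable.) -/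
/-- The preimage operator of a transition relation. -/
def Pre {S : Type*} (τ : S → S → Prop) (X : Set S) : Set S :=
  {s | ∃ s', τ s s' ∧ s' ∈ X}

lemma mem_iterate_pre {S : Type*} (τ : S → S → Prop) (ν : Set S) (s : S) :
    (∃ t ∈ ν, Relation.ReflTransGen τ s t) ↔ ∃ k, s ∈ (Pre τ)^[k] ν := by
  constructor
  · rintro ⟨t, ht, h⟩
    induction h using Relation.ReflTransGen.head_induction_on with
    | refl => exact ⟨0, ht⟩
    | head hab _ ih =>
      obtain ⟨k, hk⟩ := ih
      exact ⟨k + 1, by rw [Function.iterate_succ_apply']; exact ⟨_, hab, hk⟩⟩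
  · rintro ⟨k, hk⟩
    induction k generalizing s with
    | zero => exact ⟨s, hk, .refl⟩
    | succ k ih =>
      rw [Function.iterate_succ_apply'] at hk
      obtain ⟨s', hss', hs'⟩ := hk
      obtain ⟨t, ht, h⟩ := ih s' hs'
      exact ⟨t, ht, .head hss' h⟩

/-- Soundness and completeness of backward reachability: some unsafe state in
`ν` is reachable from some initial state in `I` iff for some `k` the set
`I ∩ Pre^[k] ν` is nonempty. -/
theorem unsafe_iff_exists_iterate_pre {S : Type*} (τ : S → S → Prop)
    (ν I : Set S) :
    (∃ s ∈ I, ∃ t ∈ ν, Relation.ReflTransGen τ s t) ↔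
      ∃ k : ℕ, (I ∩ (Pre τ)^[k] ν).Nonempty := by
  constructor
  · rintro ⟨s, hsI, h⟩
    obtain ⟨k, hk⟩ := (mem_iterate_pre τ ν s).mp h
    exact ⟨k, s, hsI, hk⟩
  · rintro ⟨k, s, hsI, hk⟩
    exact ⟨s, hsI, (mem_iterate_pre τ ν s).mpr ⟨k, hk⟩⟩
end

section
/- Let S be a type of states, τ : S → S → Prop a transition relation, ν : Set S a set of unsafe states, and I : Set S a set of initial states. Define Pre : Set S → Set S by Pre(X) = {s | ∃ s', τ s s' ∧ s' ∈ X}, let Pre^[j] denote its j-fold iterate, and define B : ℕ → Set S by B n = ⋃_{j < n} Pre^[j](ν). Suppose for some n ∈ ℕ that Pre^[n](ν) ⊆ B n and that I ∩ Pre^[j](ν) = ∅ for every j < n. Then the system is safe: there is no s ∈ I and t ∈ ν with Relation.ReflTransGen τ s t. (This is the correctness of the 'safe' outcome of the backward reachability algorithm.) -/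
/-- The accumulated backward-reachability set after `n` iterations. -/
def B {S : Type*} (τ : S → S → Prop) (ν : Set S) (n : ℕ) : Set S :=
  ⋃ j < n, (Pre τ)^[j] ν

/-- Correctness of the `safe` outcome of backward reachability: if the fixpoint
test succeeds at step `n` and no intersection `I ∩ Pre^[j] ν` with `j < n` is
nonempty, then no unsafe state in `ν` is reachable from an initial state in `I`. -/
theorem safe_outcome_correct {S : Type*} (τ : S → S → Prop) (ν I : Set S)
    (n : ℕ) (hfix : (Pre τ)^[n] ν ⊆ B τ ν n)
    (hempty : ∀ j < n, I ∩ (Pre τ)^[j] ν = ∅) :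
    ¬ ∃ s ∈ I, ∃ t ∈ ν, Relation.ReflTransGen τ s t := by
  rintro ⟨s, hsI, t, htν, hreach⟩
  -- B τ ν n is closed under Pre
  have hclosed : Pre τ (B τ ν n) ⊆ B τ ν n := by
    rintro x ⟨x', hτ, hx'⟩
    simp only [B, Set.mem_iUnion] at hx' ⊢
    obtain ⟨j, hj, hx'j⟩ := hx'
    have hx : x ∈ (Pre τ)^[j + 1] ν := by
      rw [Function.iterate_succ_apply']
      exact ⟨x', hτ, hx'j⟩
    rcases lt_or_eq_of_le (Nat.succ_le_of_lt hj) with h | h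
    · exact ⟨j + 1, h, hx⟩
    · have hx2 : x ∈ (Pre τ)^[n] ν := by rw [← h]; exact hx
      have := hfix hx2
      simpa [B, Set.mem_iUnion] using this
  rcases Nat.eq_zero_or_pos n with rfl | hn
  · have : ν ⊆ B τ ν 0 := hfix
    have := this htν
    simp [B] at this
  · have hν : ν ⊆ B τ ν n := fun x hx => by
      simp only [B, Set.mem_iUnion]
      exact ⟨0, hn, hx⟩
    have hsB : s ∈ B τ ν n := by
      clear hsI hempty
      induction hreach using Relation.ReflTransGen.head_induction_on with
      | refl => exact hν htν
      | head hτ _ ih => exact hclosed ⟨_, hτ, ih⟩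
    simp only [B, Set.mem_iUnion] at hsB
    obtain ⟨j, hj, hsj⟩ := hsB
    exact Set.eq_empty_iff_forall_notMem.mp (hempty j hj) s ⟨hsI, hsj⟩
end
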